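/- arXiv:2405.02224 — 2 statements merged into one kernel-verified Lean document; each statement's English description precedes it below -/
import Mathlib

section
/- The coefficients c_n = √2 (-1)^n Γ(2n + 1/2) / n! satisfy the asymptotic relation c_n / (n! (-4)^n · (1/(√π n))) → 1 as n → ∞. -/
open Real Filter

lemma gamma_half (n : ℕ) : Real.Gamma (n + 1/2) =
    ((2*n).factorial : ℝ) * Real.sqrt π / (4^n * n.factorial) := by
  induction n with
  | zero =>
    rw [show ((0:ℕ):ℝ) + 1/2 = 1/2 by norm_num, Real.Gamma_one_half_eq]; simp
  | succ n ih =>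
    have h : ((n:ℝ) + 1 + 1/2) = ((n:ℝ) + 1/2) + 1 := by ring
    rw [Nat.cast_add, Nat.cast_one, h, Real.Gamma_add_one (by positivity), ih]
    have h2 : 2*(n+1) = (2*n+1) + 1 := by ring
    rw [h2, Nat.factorial_succ, Nat.factorial_succ, Nat.factorial_succ]
    push_cast
    have h4 : (4:ℝ)^n ≠ 0 := by positivity
    have hf : ((n.factorial : ℝ)) ≠ 0 := by positivity
    field_simp
    ring

open Stirling in
lemma key (n : ℕ) (hn : 1 ≤ n) :
    (Real.sqrt 2 * (-1 : ℝ)^n * Real.Gamma (2*n + 1/2) / (n.factorial : ℝ)) /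
      ((n.factorial : ℝ) * (-4 : ℝ)^n * (1 / (Real.sqrt π * n))) =
    π * stirlingSeq (4*n) / (stirlingSeq (2*n) * stirlingSeq n ^ 2) := by
  have hN : (0:ℝ) < n := by exact_mod_cast hn
  have hg : Real.Gamma (2*n + 1/2) =
      ((4*n).factorial : ℝ) * Real.sqrt π / (4^(2*n) * (2*n).factorial) := by
    have := gamma_half (2*n)
    push_cast at this ⊢
    rw [show (2*(n:ℝ) + 1/2) = ((2*n:ℕ):ℝ) + 1/2 by push_cast; ring] at *
    rw [this]
    norm_num [show 2*(2*n) = 4*n by ring]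
  rw [hg]
  simp only [stirlingSeq]
  have e1 : Real.sqrt (2 * ((4*n:ℕ):ℝ)) = 2 * Real.sqrt 2 * Real.sqrt n := by
    push_cast
    rw [show (2 * (4*(n:ℝ))) = (2*Real.sqrt 2)^2 * n by
      rw [mul_pow, Real.sq_sqrt (by norm_num)]; ring]
    rw [Real.sqrt_mul (by positivity), Real.sqrt_sq (by positivity)]
  have e2 : Real.sqrt (2 * ((2*n:ℕ):ℝ)) = 2 * Real.sqrt n := by
    push_cast
    rw [show (2 * (2*(n:ℝ))) = 2^2 * n by ring]
    rw [Real.sqrt_mul (by positivity), Real.sqrt_sq (by positivity)]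
  have e3 : Real.sqrt (2 * (n:ℝ)) = Real.sqrt 2 * Real.sqrt n := Real.sqrt_mul (by norm_num) _
  rw [e1, e2, e3]
  have h4 : (-4:ℝ)^n = (-1)^n * 2^(2*n) := by
    rw [show (-4:ℝ) = (-1)*2^2 by norm_num, mul_pow, ← pow_mul]
  rw [h4]
  have hsq2 : Real.sqrt 2 ^ 2 = 2 := Real.sq_sqrt (by norm_num)
  have hsqpi : Real.sqrt π ^ 2 = π := Real.sq_sqrt pi_pos.le
  have hsqn : Real.sqrt (n:ℝ) ^ 2 = n := Real.sq_sqrt hN.le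
  have hp1 : ((4*n:ℕ):ℝ) / Real.exp 1 = 4 * n / Real.exp 1 := by push_cast; ring
  have hp2 : (((2*n:ℕ)):ℝ) / Real.exp 1 = 2 * n / Real.exp 1 := by push_cast; ring
  rw [hp1, hp2]
  have q1 : (4 * (n:ℝ) / Real.exp 1)^(4*n) = 2^(8*n) * ((n:ℝ)/Real.exp 1)^(4*n) := by
    rw [mul_div_assoc, mul_pow, show (4:ℝ) = 2^2 by norm_num, ← pow_mul,
      show 2*(4*n) = 8*n by ring]
  have q2 : (2 * (n:ℝ) / Real.exp 1)^(2*n) = 2^(2*n) * ((n:ℝ)/Real.exp 1)^(2*n) := by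
    rw [mul_div_assoc, mul_pow]
  rw [q1, q2, show (4:ℝ)^(2*n) = 2^(4*n) by
      rw [show (4:ℝ) = 2^2 by norm_num, ← pow_mul, show 2*(2*n) = 4*n by ring]]
  have hfn : ((n.factorial:ℝ)) ≠ 0 := by positivity
  have hf2 : (((2*n).factorial:ℝ)) ≠ 0 := by positivity
  have hf4 : (((4*n).factorial:ℝ)) ≠ 0 := by positivity
  have hne1 : ((-1:ℝ))^n ≠ 0 := by
    rcases Nat.even_or_odd n with h | h
    · simp [h.neg_one_pow]
    · simp [h.neg_one_pow]
  have he : Real.exp 1 ≠ 0 := Real.exp_ne_zero 1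
  have hsn : Real.sqrt (n:ℝ) ≠ 0 := by positivity
  have hs2 : Real.sqrt 2 ≠ 0 := by positivity
  have hsp : Real.sqrt π ≠ 0 := by
    have := pi_pos; positivity
  have hNn : ((n:ℝ)) ≠ 0 := hN.ne'
  have hpow : ∀ m : ℕ, ((n:ℝ) / Real.exp 1)^m ≠ 0 := fun m => by
    apply pow_ne_zero; positivity
  set a := Real.sqrt 2 with ha
  set b := Real.sqrt π with hb
  set c := Real.sqrt (n:ℝ) with hc
  set E := Real.exp 1 with hE
  rw [← hsqn, ← hsqpi, ← hsq2]
  field_simp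
  ring

theorem stmt_1 :
    Tendsto (fun n : ℕ =>
      (Real.sqrt 2 * (-1 : ℝ)^n * Real.Gamma (2*n + 1/2) / (n.factorial : ℝ)) /
        ((n.factorial : ℝ) * (-4 : ℝ)^n * (1 / (Real.sqrt π * n))))
      atTop (nhds 1) := by
  have m4 : Tendsto (fun n : ℕ => 4*n) atTop atTop :=
    tendsto_atTop_mono (f := id) (fun n => Nat.le_mul_of_pos_left n (by norm_num)) tendsto_id
  have m2 : Tendsto (fun n : ℕ => 2*n) atTop atTop :=
    tendsto_atTop_mono (f := id) (fun n => Nat.le_mul_of_pos_left n (by norm_num)) tendsto_id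
  have t4 : Tendsto (fun n : ℕ => Stirling.stirlingSeq (4*n)) atTop (nhds (Real.sqrt π)) :=
    Stirling.tendsto_stirlingSeq_sqrt_pi.comp m4
  have t2 : Tendsto (fun n : ℕ => Stirling.stirlingSeq (2*n)) atTop (nhds (Real.sqrt π)) :=
    Stirling.tendsto_stirlingSeq_sqrt_pi.comp m2
  have t1 := Stirling.tendsto_stirlingSeq_sqrt_pi
  have hsp : Real.sqrt π ≠ 0 := by have := pi_pos; positivity
  have hden : Real.sqrt π * Real.sqrt π ^ 2 ≠ 0 := by
    have := pi_pos; positivity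
  have h1 : Tendsto (fun n : ℕ => π * Stirling.stirlingSeq (4*n) /
      (Stirling.stirlingSeq (2*n) * Stirling.stirlingSeq n ^ 2)) atTop
      (nhds (π * Real.sqrt π / (Real.sqrt π * Real.sqrt π ^ 2))) :=
    (tendsto_const_nhds.mul t4).div (t2.mul (t1.pow 2)) hden
  have hval : π * Real.sqrt π / (Real.sqrt π * Real.sqrt π ^ 2) = 1 := by
    rw [Real.sq_sqrt pi_pos.le]
    field_simp
  rw [hval] at h1
  apply Tendsto.congr' _ h1
  filter_upwards [eventually_ge_atTop 1] with n hn
  exact (key n hn).symm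
end

section
/- For the geometric Borel function f̂(t) = 1/(1 - a t) with a < 0, the Laplace integral ∫_0^∞ e^{-t} f̂(g t) dt converges for all g > 0, and the function f_B(g) so defined has asymptotic expansion ∑ n! a^n g^n as g → 0⁺, i.e. for each N, f_B(g) - ∑_{n<N} n! a^n g^n = O(g^N). -/
open MeasureTheory Filter Topology Asymptotics

/-!
For `t ≥ 0` we have `a t ≤ 0`, so `1 / (1 - a t) = ∑_{n<N} (a t)^n + (a t)^N / (1 - a t)` with
remainder at most `|a|^N t^N`. Since `∫_0^∞ e^{-t} t^n dt = n!`, integrating against `e^{-t}`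
after `t ↦ g t` turns the Taylor polynomial into `∑_{n<N} n! a^n g^n` and bounds the remainder
by `|a|^N N! g^N`.
-/

open Finset Set Real

lemma integrableOn_exp_neg_mul_pow (n : ℕ) :
    IntegrableOn (fun t : ℝ => exp (-t) * t ^ n) (Ici 0) := by
  rw [integrableOn_Ici_iff_integrableOn_Ioi]
  refine (GammaIntegral_convergent (s := (n : ℝ) + 1) (by positivity)).congr_fun
    (fun t _ => ?_) measurableSet_Ioi
  simp only [add_sub_cancel_right, rpow_natCast]

lemma integral_exp_neg_mul_pow (n : ℕ) :
    ∫ t in Ici (0 : ℝ), exp (-t) * t ^ n = n.factorial := by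
  rw [integral_Ici_eq_integral_Ioi, ← Gamma_nat_eq_factorial,
    Gamma_eq_integral (by positivity)]
  refine setIntegral_congr_fun measurableSet_Ioi fun t _ => ?_
  simp only [add_sub_cancel_right, rpow_natCast]

lemma exp_neg_mul_sum_mul_pow (c : ℕ → ℝ) (g t : ℝ) (N : ℕ) :
    exp (-t) * ∑ n ∈ range N, c n * (g * t) ^ n =
      ∑ n ∈ range N, c n * g ^ n * (exp (-t) * t ^ n) := by
  rw [mul_sum]
  exact sum_congr rfl fun n _ => by ring

lemma integrableOn_exp_neg_mul_sum_mul_pow (c : ℕ → ℝ) (g : ℝ) (N : ℕ) :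
    IntegrableOn (fun t => exp (-t) * ∑ n ∈ range N, c n * (g * t) ^ n) (Ici 0) := by
  simp_rw [exp_neg_mul_sum_mul_pow]
  exact integrable_finsetSum _ fun n _ => (integrableOn_exp_neg_mul_pow n).const_mul _

lemma integral_exp_neg_mul_sum_mul_pow (c : ℕ → ℝ) (g : ℝ) (N : ℕ) :
    ∫ t in Ici (0 : ℝ), exp (-t) * ∑ n ∈ range N, c n * (g * t) ^ n =
      ∑ n ∈ range N, (n.factorial : ℝ) * c n * g ^ n := by
  simp_rw [exp_neg_mul_sum_mul_pow]
  rw [integral_finsetSum _ fun n _ => (integrableOn_exp_neg_mul_pow n).const_mul _]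
  refine sum_congr rfl fun n _ => ?_
  rw [integral_const_mul, integral_exp_neg_mul_pow]
  ring

section LaplaceTransform

variable {f : ℝ → ℝ} {c : ℕ → ℝ} {N : ℕ} {C : ℝ}

lemma norm_exp_neg_mul_sub_sum_le
    (hfc : ∀ t, 0 ≤ t → |f t - ∑ n ∈ range N, c n * t ^ n| ≤ C * t ^ N) {g t : ℝ} (hg : 0 ≤ g)
    (ht : 0 ≤ t) :
    ‖exp (-t) * (f (g * t) - ∑ n ∈ range N, c n * (g * t) ^ n)‖ ≤
      C * g ^ N * (exp (-t) * t ^ N) := by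
  rw [norm_mul, norm_of_nonneg (exp_pos _).le, norm_eq_abs]
  calc exp (-t) * |f (g * t) - ∑ n ∈ range N, c n * (g * t) ^ n|
      ≤ exp (-t) * (C * (g * t) ^ N) := by gcongr; exact hfc _ (mul_nonneg hg ht)
    _ = C * g ^ N * (exp (-t) * t ^ N) := by ring

lemma integrableOn_exp_neg_mul_sub_sum (hf : Measurable f)
    (hfc : ∀ t, 0 ≤ t → |f t - ∑ n ∈ range N, c n * t ^ n| ≤ C * t ^ N) {g : ℝ} (hg : 0 ≤ g) :
    IntegrableOn (fun t => exp (-t) * (f (g * t) - ∑ n ∈ range N, c n * (g * t) ^ n))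
      (Ici 0) := by
  refine Integrable.mono' ((integrableOn_exp_neg_mul_pow N).const_mul (C * g ^ N))
    (by fun_prop) ?_
  rw [ae_restrict_iff' measurableSet_Ici]
  filter_upwards with t ht
  exact norm_exp_neg_mul_sub_sum_le hfc hg ht

lemma integrableOn_exp_neg_mul_comp_mul (hf : Measurable f)
    (hfc : ∀ t, 0 ≤ t → |f t - ∑ n ∈ range N, c n * t ^ n| ≤ C * t ^ N) {g : ℝ} (hg : 0 ≤ g) :
    IntegrableOn (fun t => exp (-t) * f (g * t)) (Ici 0) := by
  refine ((integrableOn_exp_neg_mul_sub_sum hf hfc hg).add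
    (integrableOn_exp_neg_mul_sum_mul_pow c g N)).congr_fun
    (fun t _ => by simp only [Pi.add_apply]; ring) measurableSet_Ici

lemma norm_integral_exp_neg_mul_comp_mul_sub_sum_le (hf : Measurable f)
    (hfc : ∀ t, 0 ≤ t → |f t - ∑ n ∈ range N, c n * t ^ n| ≤ C * t ^ N) {g : ℝ} (hg : 0 ≤ g) :
    ‖(∫ t in Ici (0 : ℝ), exp (-t) * f (g * t)) -
        ∑ n ∈ range N, (n.factorial : ℝ) * c n * g ^ n‖ ≤ C * N.factorial * g ^ N := by
  have hsplit : (∫ t in Ici (0 : ℝ), exp (-t) * f (g * t)) -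
      ∑ n ∈ range N, (n.factorial : ℝ) * c n * g ^ n =
        ∫ t in Ici (0 : ℝ), exp (-t) * (f (g * t) - ∑ n ∈ range N, c n * (g * t) ^ n) := by
    rw [← integral_exp_neg_mul_sum_mul_pow, ← integral_sub
      (integrableOn_exp_neg_mul_comp_mul hf hfc hg) (integrableOn_exp_neg_mul_sum_mul_pow c g N)]
    simp_rw [mul_sub]
  calc _ ≤ ∫ t in Ici (0 : ℝ), C * g ^ N * (exp (-t) * t ^ N) := by
        rw [hsplit]
        refine norm_integral_le_of_norm_le ((integrableOn_exp_neg_mul_pow N).const_mul _) ?_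
        rw [ae_restrict_iff' measurableSet_Ici]
        filter_upwards with t ht
        exact norm_exp_neg_mul_sub_sum_le hfc hg ht
    _ = C * N.factorial * g ^ N := by
        rw [integral_const_mul, integral_exp_neg_mul_pow]
        ring

lemma isBigO_integral_exp_neg_mul_comp_mul_sub_sum (hf : Measurable f)
    (hfc : ∀ t, 0 ≤ t → |f t - ∑ n ∈ range N, c n * t ^ n| ≤ C * t ^ N) :
    (fun g => (∫ t in Ici (0 : ℝ), exp (-t) * f (g * t)) -
        ∑ n ∈ range N, (n.factorial : ℝ) * c n * g ^ n) =O[𝓝[>] 0] fun g => g ^ N := by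
  refine isBigO_iff.2 ⟨C * N.factorial, ?_⟩
  filter_upwards [self_mem_nhdsWithin] with g (hg : 0 < g)
  rw [norm_of_nonneg (pow_pos hg N).le]
  exact norm_integral_exp_neg_mul_comp_mul_sub_sum_le hf hfc hg.le

end LaplaceTransform

lemma abs_one_div_one_sub_sub_geom_sum_le {x : ℝ} (hx : x ≤ 0) (N : ℕ) :
    |1 / (1 - x) - ∑ n ∈ range N, x ^ n| ≤ |x| ^ N := by
  have hx1 : 1 ≤ 1 - x := by linarith
  have hne : x - 1 ≠ 0 := by linarith
  have hremainder : 1 / (1 - x) - ∑ n ∈ range N, x ^ n = x ^ N / (1 - x) := by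
    rw [geom_sum_eq (by linarith)]
    field_simp
    ring
  rw [hremainder, abs_div, abs_pow, abs_of_pos (by linarith : 0 < 1 - x)]
  exact div_le_self (by positivity) hx1

theorem stmt_3 (a : ℝ) (ha : a < 0) :
    (∀ g : ℝ, 0 < g → MeasureTheory.IntegrableOn
      (fun t : ℝ => Real.exp (-t) * (1 / (1 - a * (g * t)))) (Set.Ici 0)) ∧
    ∀ N : ℕ,
      (fun g : ℝ => (∫ t in Set.Ici (0:ℝ), Real.exp (-t) * (1 / (1 - a * (g * t)))) -
        ∑ n ∈ Finset.range N, (n.factorial : ℝ) * a^n * g^n)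
      =O[𝓝[>] (0:ℝ)] fun g : ℝ => g^N := by
  have hf : Measurable fun t : ℝ => 1 / (1 - a * t) := by fun_prop
  have hfc : ∀ N : ℕ, ∀ t : ℝ, 0 ≤ t →
      |1 / (1 - a * t) - ∑ n ∈ range N, a ^ n * t ^ n| ≤ |a| ^ N * t ^ N := fun N t ht => by
    simpa only [mul_pow, abs_mul, abs_of_nonneg ht] using
      abs_one_div_one_sub_sub_geom_sum_le (mul_nonpos_of_nonpos_of_nonneg ha.le ht) N
  exact ⟨fun g hg => integrableOn_exp_neg_mul_comp_mul hf (hfc 0) hg.le,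
    fun N => isBigO_integral_exp_neg_mul_comp_mul_sub_sum hf (hfc N)⟩
end
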